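/- arXiv:math/0407050 — 2 statements merged into one kernel-verified Lean document; each statement's English description precedes it below -/
import Mathlib

section
/- For every positive integer n, the group with presentation ⟨a, b, c | a = b^n c b^{-n}, b = c^n a c^{-n}, c = a^n b a^{-n}⟩ (the n-th generalized knot group of the right-handed trefoil) is isomorphic to the group with presentation ⟨a, b, c | a = b^{-n} c b^{n}, b = c^{-n} a c^{n}, c = a^{-n} b a^{n}⟩ (the n-th generalized knot group of the left-handed trefoil). -/
/-- Relators of the n-th generalized knot group of the right-handed trefoil:
⟨a, b, c | a = bⁿ c b⁻ⁿ, b = cⁿ a c⁻ⁿ, c = aⁿ b a⁻ⁿ⟩, with a, b, c = 0, 1, 2. -/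
def trefoilRightRels (n : ℕ) : Set (FreeGroup (Fin 3)) :=
  let a : FreeGroup (Fin 3) := FreeGroup.of 0
  let b : FreeGroup (Fin 3) := FreeGroup.of 1
  let c : FreeGroup (Fin 3) := FreeGroup.of 2
  {a * (b ^ n * c * (b ^ n)⁻¹)⁻¹,
   b * (c ^ n * a * (c ^ n)⁻¹)⁻¹,
   c * (a ^ n * b * (a ^ n)⁻¹)⁻¹}

/-- Relators of the n-th generalized knot group of the left-handed trefoil:
⟨a, b, c | a = b⁻ⁿ c bⁿ, b = c⁻ⁿ a cⁿ, c = a⁻ⁿ b aⁿ⟩, with a, b, c = 0, 1, 2. -/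
def trefoilLeftRels (n : ℕ) : Set (FreeGroup (Fin 3)) :=
  let a : FreeGroup (Fin 3) := FreeGroup.of 0
  let b : FreeGroup (Fin 3) := FreeGroup.of 1
  let c : FreeGroup (Fin 3) := FreeGroup.of 2
  {a * ((b ^ n)⁻¹ * c * b ^ n)⁻¹,
   b * ((c ^ n)⁻¹ * a * c ^ n)⁻¹,
   c * ((a ^ n)⁻¹ * b * a ^ n)⁻¹}

/-!
If `x = y⁻ᵏ z yᵏ` then `x⁻¹ = (y⁻¹)ᵏ z⁻¹ (y⁻¹)⁻ᵏ`, so the inverses of the generators of the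
mirror image's group satisfy the relations of the original diagram. Inverting the generators is
therefore a homomorphism in both directions, and it is an involution.
-/

namespace GeneralizedKnotGroup

open PresentedGroup

variable {ι α : Type*}

/-- Crossing `i` imposes `x i = (y i) ^ e i * z i * (y i) ^ (-e i)`, with `e i = ±n` by its sign. -/
def rels (x y z : ι → α) (e : ι → ℤ) : Set (FreeGroup α) :=
  Set.range fun i => FreeGroup.of (x i) *
    (FreeGroup.of (y i) ^ e i * FreeGroup.of (z i) * (FreeGroup.of (y i) ^ e i)⁻¹)⁻¹

variable {x y z : ι → α}

lemma of_eq_conj (e : ι → ℤ) (i : ι) :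
    (of (x i) : PresentedGroup (rels x y z e)) = of (y i) ^ e i * of (z i) * (of (y i) ^ e i)⁻¹ := by
  have h := mk_eq_mk_of_mul_inv_mem (rels := rels x y z e) ⟨i, rfl⟩
  simp only [map_mul, map_inv, map_zpow] at h
  exact h

def mirrorHom (x y z : ι → α) {e e' : ι → ℤ} (h : ∀ i, e' i = -e i) :
    PresentedGroup (rels x y z e) →* PresentedGroup (rels x y z e') :=
  toGroup (f := fun a => (of a)⁻¹) <| by
    rintro _ ⟨i, rfl⟩
    simp only [map_mul, map_inv, map_zpow, FreeGroup.lift_apply_of, of_eq_conj e' i, h, zpow_neg,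
      inv_zpow', mul_inv_rev, inv_inv]
    group

lemma mirrorHom_of {e e' : ι → ℤ} (h : ∀ i, e' i = -e i) (a : α) :
    mirrorHom x y z h (of a) = (of a)⁻¹ :=
  toGroup.of _

def mirrorEquiv (e : ι → ℤ) : PresentedGroup (rels x y z e) ≃* PresentedGroup (rels x y z (-e)) :=
  MonoidHom.toMulEquiv (mirrorHom x y z fun _ => rfl) (mirrorHom x y z fun _ => (neg_neg _).symm)
    (PresentedGroup.ext fun a => by simp [mirrorHom_of])
    (PresentedGroup.ext fun a => by simp [mirrorHom_of])

end GeneralizedKnotGroup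

open GeneralizedKnotGroup

lemma trefoilRightRels_eq_rels (n : ℕ) :
    trefoilRightRels n = rels id (· + 1) (· + 2) fun _ => (n : ℤ) := by
  ext r
  simp [trefoilRightRels, rels, Fin.exists_fin_succ, eq_comm]

lemma trefoilLeftRels_eq_rels (n : ℕ) :
    trefoilLeftRels n = rels id (· + 1) (· + 2) (-fun _ => (n : ℤ)) := by
  ext r
  simp [trefoilLeftRels, rels, Fin.exists_fin_succ, eq_comm]

theorem stmt_0_general (n : ℕ) :
    Nonempty (PresentedGroup (trefoilRightRels n) ≃* PresentedGroup (trefoilLeftRels n)) := by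
  rw [trefoilRightRels_eq_rels, trefoilLeftRels_eq_rels]
  exact ⟨mirrorEquiv _⟩

theorem stmt_0 (n : ℕ) (hn : 0 < n) :
    Nonempty (PresentedGroup (trefoilRightRels n) ≃* PresentedGroup (trefoilLeftRels n)) :=
  stmt_0_general n
end

section
/- Let G be a group, let b, d, e ∈ G, let n be a positive integer, and set D = d^n, B = b^n, E = e^n. Suppose b D B = D B d and e D E = D E d. Then the equation E D e D^{-1} E^{-1} = B D b D^{-1} B^{-1} holds in G if and only if (E D)^3 d (E D)^{-3} = (B D)^3 d (B D)^{-3}. -/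
/-- The key identity: `(B D)^3 = B (D B)^2 D`, and conjugation by `D B` sends `d` to `x`. -/
theorem conj_mul_pow_three_eq {G : Type*} [Group G] {x d D B : G} (hDd : Commute D d)
    (hBx : Commute B x) (h : SemiconjBy (D * B) d x) :
    (B * D) ^ 3 * d * ((B * D) ^ 3)⁻¹ = B * D * x * D⁻¹ * B⁻¹ := by
  have hconj : D * B * d * (D * B)⁻¹ = x := by rw [h.eq, mul_inv_cancel_right]
  calc (B * D) ^ 3 * d * ((B * D) ^ 3)⁻¹
      = B * (D * B) * (D * B * (D * d * D⁻¹) * (D * B)⁻¹) * (D * B)⁻¹ * B⁻¹ := by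
        rw [pow_three]; group
    _ = B * (D * B) * x * (D * B)⁻¹ * B⁻¹ := by rw [hDd.mul_inv_cancel, hconj]
    _ = B * D * (B * x * B⁻¹) * D⁻¹ * B⁻¹ := by group
    _ = B * D * x * D⁻¹ * B⁻¹ := by rw [hBx.mul_inv_cancel]

theorem stmt_9_general {G : Type*} [Group G] (b d e : G) (n : ℕ)
    (D B E : G) (hD : D = d ^ n) (hB : B = b ^ n) (hE : E = e ^ n)
    (h1 : b * D * B = D * B * d) (h2 : e * D * E = D * E * d) :
    E * D * e * D⁻¹ * E⁻¹ = B * D * b * D⁻¹ * B⁻¹ ↔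
      (E * D) ^ 3 * d * ((E * D) ^ 3)⁻¹ = (B * D) ^ 3 * d * ((B * D) ^ 3)⁻¹ := by
  subst hD hB hE
  rw [conj_mul_pow_three_eq (Commute.pow_self d n) (Commute.pow_self b n)
      (by rw [SemiconjBy, ← h1, mul_assoc]),
    conj_mul_pow_three_eq (Commute.pow_self d n) (Commute.pow_self e n)
      (by rw [SemiconjBy, ← h2, mul_assoc])]

theorem stmt_9 {G : Type*} [Group G] (b d e : G) (n : ℕ) (hn : 0 < n)
    (D B E : G) (hD : D = d ^ n) (hB : B = b ^ n) (hE : E = e ^ n)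
    (h1 : b * D * B = D * B * d) (h2 : e * D * E = D * E * d) :
    E * D * e * D⁻¹ * E⁻¹ = B * D * b * D⁻¹ * B⁻¹ ↔
      (E * D) ^ 3 * d * ((E * D) ^ 3)⁻¹ = (B * D) ^ 3 * d * ((B * D) ^ 3)⁻¹ :=
  stmt_9_general b d e n D B E hD hB hE h1 h2
end
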